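/- Let F and G be two cumulative distribution functions on the reals, and let ε > 0. Suppose F and G agree outside a bounded interval [a,b] and that the sup-norm distance between F and G is less than ε. Then for every strike K ≥ 0, the absolute difference between the call-payoff integrals ∫(x−K)⁺ dF(x) and ∫(x−K)⁺ dG(x) (Riemann–Stieltjes integrals) is at most ε·(b−a). -/

import Mathlib

/-!
By the layer-cake formula, `∫ (x - K)⁺ dF = ∫_{t > 0} F.measure (K + t, ∞)`, and the upper tail
`F.measure (y, ∞) = 1 - F y` of a CDF moves by less than `ε` when `F` is replaced by `G`, and not
at all for `y ∉ [a, b]`. Integrating, each call price exceeds the other by at most `ε (b - a)`.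
-/

open MeasureTheory Filter Set

theorem lintegral_ofReal_max_sub_zero_eq (μ : Measure ℝ) (K : ℝ) :
    ∫⁻ x, ENNReal.ofReal (max (x - K) 0) ∂μ = ∫⁻ t in Ioi 0, μ (Ioi (K + t)) := by
  rw [lintegral_eq_lintegral_meas_lt (f := fun x => max (x - K) 0) μ
    (ae_of_all _ fun x => le_max_right _ _)
    ((measurable_id.sub_const K).max measurable_const).aemeasurable]
  refine setLIntegral_congr_fun measurableSet_Ioi fun t (ht : 0 < t) => ?_
  congr 1
  ext x
  simp only [mem_ofPred_eq, mem_Ioi, lt_max_iff, ht.not_gt, or_false]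
  constructor <;> intro h <;> linarith

namespace StieltjesFunction

theorem measure_Ioi_le_add_indicator {F G : StieltjesFunction ℝ} {l ε : ℝ} {s : Set ℝ}
    (hF : Tendsto F atTop (nhds l)) (hG : Tendsto G atTop (nhds l))
    (hagree : ∀ x ∉ s, F x = G x) (hclose : ∀ x, |F x - G x| ≤ ε) (y : ℝ) :
    F.measure (Ioi y) ≤ G.measure (Ioi y) + s.indicator (fun _ => ENNReal.ofReal ε) y := by
  rw [F.measure_Ioi hF, G.measure_Ioi hG]
  by_cases hy : y ∈ s
  · rw [indicator_of_mem hy]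
    refine (ENNReal.ofReal_le_ofReal ?_).trans ENNReal.ofReal_add_le
    linarith [abs_le.mp (hclose y)]
  · rw [indicator_of_notMem hy, hagree y hy, add_zero]

theorem lintegral_ofReal_max_sub_zero_le_add {F G : StieltjesFunction ℝ} {l ε a b : ℝ}
    (hF : Tendsto F atTop (nhds l)) (hG : Tendsto G atTop (nhds l))
    (hagree : ∀ x ∉ Icc a b, F x = G x) (hclose : ∀ x, |F x - G x| ≤ ε) (hab : a ≤ b) (K : ℝ) :
    ∫⁻ x, ENNReal.ofReal (max (x - K) 0) ∂F.measure
      ≤ ∫⁻ x, ENNReal.ofReal (max (x - K) 0) ∂G.measure + ENNReal.ofReal (ε * (b - a)) := by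
  set bump : ℝ → ENNReal := (Icc a b).indicator fun _ => ENNReal.ofReal ε
  have hbump_meas : Measurable bump := measurable_const.indicator measurableSet_Icc
  have hbump : ∫⁻ t in Ioi 0, bump (K + t) ≤ ENNReal.ofReal (ε * (b - a)) :=
    calc ∫⁻ t in Ioi 0, bump (K + t)
        ≤ ∫⁻ t, bump (K + t) := setLIntegral_le_lintegral _ _
      _ = ∫⁻ t, bump t := lintegral_add_left_eq_self bump K
      _ = ENNReal.ofReal (ε * (b - a)) := by
        rw [lintegral_indicator_const measurableSet_Icc, Real.volume_Icc,
          ENNReal.ofReal_mul' (sub_nonneg.mpr hab)]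
  simp only [lintegral_ofReal_max_sub_zero_eq]
  calc ∫⁻ t in Ioi 0, F.measure (Ioi (K + t))
      ≤ ∫⁻ t in Ioi 0, (G.measure (Ioi (K + t)) + bump (K + t)) :=
        lintegral_mono fun t => measure_Ioi_le_add_indicator hF hG hagree hclose (K + t)
    _ = (∫⁻ t in Ioi 0, G.measure (Ioi (K + t))) + ∫⁻ t in Ioi 0, bump (K + t) :=
        lintegral_add_right _ (hbump_meas.comp (measurable_const_add K))
    _ ≤ _ := add_le_add_right hbump _

end StieltjesFunction

theorem ENNReal.abs_toReal_sub_toReal_le {x y : ENNReal} {c : ℝ} (hc : 0 ≤ c)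
    (hxy : x ≤ y + ENNReal.ofReal c) (hyx : y ≤ x + ENNReal.ofReal c) :
    |x.toReal - y.toReal| ≤ c := by
  have toReal_le : ∀ {x y : ENNReal}, x ≤ y + ENNReal.ofReal c → y ≤ x + ENNReal.ofReal c →
      x.toReal ≤ y.toReal + c := fun {x y} hxy hyx => by
    simpa [ENNReal.toReal_ofReal hc] using ENNReal.toReal_le_add' hxy
      (fun hy => by simpa [hy] using hyx) (by simp)
  rw [abs_sub_le_iff]
  constructor <;> linarith [toReal_le hxy hyx, toReal_le hyx hxy]

theorem call_price_bound_general (F G : StieltjesFunction ℝ) (ε a b : ℝ) (hε : 0 < ε) (hab : a ≤ b)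
    (hF1 : Tendsto F atTop (nhds 1)) (hG1 : Tendsto G atTop (nhds 1))
    (hagree : ∀ x : ℝ, x ∉ Set.Icc a b → F x = G x)
    (hsup : ∀ x : ℝ, |F x - G x| < ε) :
    ∀ K : ℝ, 0 ≤ K →
      |(∫ x, max (x - K) 0 ∂F.measure) - ∫ x, max (x - K) 0 ∂G.measure| ≤ ε * (b - a) := by
  intro K _
  have hpayoff_nonneg : ∀ μ : Measure ℝ, 0 ≤ᵐ[μ] fun x => max (x - K) 0 :=
    fun _ => ae_of_all _ fun x => le_max_right _ _
  have hpayoff_meas : Measurable fun x : ℝ => max (x - K) 0 :=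
    (measurable_id.sub_const K).max measurable_const
  rw [integral_eq_lintegral_of_nonneg_ae (hpayoff_nonneg _) hpayoff_meas.aestronglyMeasurable,
    integral_eq_lintegral_of_nonneg_ae (hpayoff_nonneg _) hpayoff_meas.aestronglyMeasurable]
  exact ENNReal.abs_toReal_sub_toReal_le (mul_nonneg hε.le (sub_nonneg.mpr hab))
    (StieltjesFunction.lintegral_ofReal_max_sub_zero_le_add hF1 hG1 hagree
      (fun x => (hsup x).le) hab K)
    (StieltjesFunction.lintegral_ofReal_max_sub_zero_le_add hG1 hF1
      (fun x hx => (hagree x hx).symm) (fun x => abs_sub_comm (G x) (F x) ▸ (hsup x).le) hab K)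

/-- If two CDFs `F`, `G` agree outside `[a,b]` and are uniformly `ε`-close,
then the call-payoff Stieltjes integrals differ by at most `ε * (b - a)`. -/
theorem call_price_bound (F G : StieltjesFunction ℝ) (ε a b : ℝ) (hε : 0 < ε) (hab : a ≤ b)
    (hF0 : Tendsto F atBot (nhds 0)) (hF1 : Tendsto F atTop (nhds 1))
    (hG0 : Tendsto G atBot (nhds 0)) (hG1 : Tendsto G atTop (nhds 1))
    (hagree : ∀ x : ℝ, x ∉ Set.Icc a b → F x = G x)
    (hsup : ∀ x : ℝ, |F x - G x| < ε) :
    ∀ K : ℝ, 0 ≤ K →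
      |(∫ x, max (x - K) 0 ∂F.measure) - ∫ x, max (x - K) 0 ∂G.measure| ≤ ε * (b - a) :=
  call_price_bound_general F G ε a b hε hab hF1 hG1 hagree hsup
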